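/- arXiv:2506.06663 — 2 statements merged into one kernel-verified Lean document; each statement's English description precedes it below -/
import Mathlib

section
/- Let m be a positive integer and a an integer with a > m. Then ∑_{k=1}^{m} ψ₀(a+1-k)/k² = ∑_{k=1}^{m} ( ψ₁(k+a-m)/k - ψ₁(k)/(k+a-m) + ψ₁(k+a-m)/(k+a-m) ) + (1/(a-m)²)·(-ψ₀(a-m+1) + ψ₀(a+1) - ψ₀(m+1) + ψ₀(1)) + (1/(a-m))·(ψ₁(a-m+1) - ψ₁(a+1)) + (1/2)·( 2ψ₁(a+1)·(ψ₀(a-m+1) - ψ₀(m+1) + ψ₀(1)) - 2ψ₁(m+1)·ψ₀(a-m+1) + ψ₂(a-m+1) - ψ₂(a+1) ) + ψ₀(a+1)·(ψ₁(1) - ψ₁(a+1)). -/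
open Finset

/-! Induction on `m` with `n = a - m` fixed. Raising `m` by one raises every argument of `ψ₀` on
the left by one, which adds the new term `ψ₀(n+1)/(m+1)²` and `∑_{k=1}^m 1/((N-k) k²)` with
`N = m+n+1`. The partial fractions `1/((N-k) k²) = 1/(N k²) + 1/(N² k) + 1/(N² (N-k))` evaluate
this sum through `ψ₀` and `ψ₁`, and the recurrences `ψ₀(l+1) = ψ₀(l) + 1/l`,
`ψ₁(l+1) = ψ₁(l) - 1/l²`, `ψ₂(l+1) = ψ₂(l) + 2/l³` show that the right-hand side grows by the
same amount. -/

/-- Digamma function at a positive integer argument: `ψ₀ l = -γ + ∑_{i=1}^{l-1} 1/i`. -/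
noncomputable def ψ₀ (l : ℕ) : ℝ :=
  -Real.eulerMascheroniConstant + ∑ i ∈ Finset.range (l - 1), (1 : ℝ) / (i + 1)

/-- Trigamma function at a positive integer argument: `ψ₁ l = π²/6 - ∑_{i=1}^{l-1} 1/i²`. -/
noncomputable def ψ₁ (l : ℕ) : ℝ :=
  Real.pi ^ 2 / 6 - ∑ i ∈ Finset.range (l - 1), (1 : ℝ) / (i + 1) ^ 2

/-- Tetragamma function at a positive integer argument:
`ψ₂ l = -2ζ(3) + 2∑_{i=1}^{l-1} 1/i³`, where `ζ(3) = ∑_{i=1}^∞ 1/i³`. -/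
noncomputable def ψ₂ (l : ℕ) : ℝ :=
  -2 * (∑' i : ℕ, (1 : ℝ) / (i + 1) ^ 3) +
    2 * ∑ i ∈ Finset.range (l - 1), (1 : ℝ) / (i + 1) ^ 3

lemma ψ₀_succ {l : ℕ} (hl : l ≠ 0) : ψ₀ (l + 1) = ψ₀ l + 1 / l := by
  obtain ⟨j, rfl⟩ : ∃ j, l = j + 1 := ⟨l - 1, by omega⟩
  simp [ψ₀, sum_range_succ, add_assoc]

lemma ψ₁_succ {l : ℕ} (hl : l ≠ 0) : ψ₁ (l + 1) = ψ₁ l - 1 / (l : ℝ) ^ 2 := by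
  obtain ⟨j, rfl⟩ : ∃ j, l = j + 1 := ⟨l - 1, by omega⟩
  simp [ψ₁, sum_range_succ, sub_add_eq_sub_sub]

lemma ψ₂_succ {l : ℕ} (hl : l ≠ 0) : ψ₂ (l + 1) = ψ₂ l + 2 / (l : ℝ) ^ 3 := by
  obtain ⟨j, rfl⟩ : ∃ j, l = j + 1 := ⟨l - 1, by omega⟩
  simp only [ψ₂, Nat.add_sub_cancel, sum_range_succ, Nat.cast_add, Nat.cast_one]
  ring

lemma sum_Icc_one_div_eq_ψ₀ (m : ℕ) :
    ∑ k ∈ Icc 1 m, (1 : ℝ) / k = ψ₀ (m + 1) - ψ₀ 1 := by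
  induction m with
  | zero => simp
  | succ m ih =>
    rw [sum_Icc_succ_top (Nat.le_add_left 1 m), ih, ψ₀_succ (l := m + 1) (by omega)]
    push_cast
    ring

lemma sum_Icc_one_div_sq_eq_ψ₁ (m : ℕ) :
    ∑ k ∈ Icc 1 m, (1 : ℝ) / (k : ℝ) ^ 2 = ψ₁ 1 - ψ₁ (m + 1) := by
  induction m with
  | zero => simp
  | succ m ih =>
    rw [sum_Icc_succ_top (Nat.le_add_left 1 m), ih, ψ₁_succ (l := m + 1) (by omega)]
    push_cast
    ring

lemma sum_Icc_one_div_reflect (m n : ℕ) :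
    ∑ k ∈ Icc 1 m, (1 : ℝ) / ((m + n + 1 - k : ℕ) : ℝ) = ψ₀ (m + n + 1) - ψ₀ (n + 1) := by
  induction m generalizing n with
  | zero => simp
  | succ m ih =>
    have hshift : ∀ k ∈ Icc 1 m,
        ((m + 1 + n + 1 - k : ℕ) : ℝ) = ((m + (n + 1) + 1 - k : ℕ) : ℝ) := fun k _ => by
      congr 1; omega
    rw [sum_Icc_succ_top (Nat.le_add_left 1 m), sum_congr rfl fun k hk => by rw [hshift k hk],
      ih (n + 1), show m + 1 + n + 1 - (m + 1) = n + 1 by omega,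
      ψ₀_succ (l := n + 1) (by omega), show m + 1 + n + 1 = m + (n + 1) + 1 by omega]
    ring

lemma one_div_sub_mul_sq {N k : ℝ} (hk : k ≠ 0) (hN : N ≠ 0) (hNk : N - k ≠ 0) :
    1 / ((N - k) * k ^ 2) =
      1 / N * (1 / k ^ 2) + 1 / N ^ 2 * (1 / k) + 1 / N ^ 2 * (1 / (N - k)) := by
  field_simp
  ring

lemma sum_Icc_one_div_reflect_mul_sq (m n : ℕ) :
    ∑ k ∈ Icc 1 m, (1 : ℝ) / (((m + n + 1 - k : ℕ) : ℝ) * (k : ℝ) ^ 2) =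
      1 / ((m + n + 1 : ℕ) : ℝ) * (ψ₁ 1 - ψ₁ (m + 1)) + 1 / ((m + n + 1 : ℕ) : ℝ) ^ 2 *
        (ψ₀ (m + 1) - ψ₀ 1 + (ψ₀ (m + n + 1) - ψ₀ (n + 1))) := by
  have hsplit : ∀ k ∈ Icc 1 m, (1 : ℝ) / (((m + n + 1 - k : ℕ) : ℝ) * (k : ℝ) ^ 2) =
      1 / ((m + n + 1 : ℕ) : ℝ) * (1 / (k : ℝ) ^ 2) + 1 / ((m + n + 1 : ℕ) : ℝ) ^ 2 * (1 / k) +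
        1 / ((m + n + 1 : ℕ) : ℝ) ^ 2 * (1 / ((m + n + 1 - k : ℕ) : ℝ)) := by
    intro k hk
    obtain ⟨hk1, hkm⟩ := mem_Icc.mp hk
    rw [Nat.cast_sub (by omega)]
    exact one_div_sub_mul_sq (by positivity) (by positivity) (sub_ne_zero.mpr (by norm_cast; omega))
  rw [sum_congr rfl hsplit, sum_add_distrib, sum_add_distrib, ← mul_sum, ← mul_sum, ← mul_sum,
    sum_Icc_one_div_sq_eq_ψ₁, sum_Icc_one_div_eq_ψ₀, sum_Icc_one_div_reflect]
  ring

lemma sum_Icc_ψ₀_reflect_succ (m n : ℕ) :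
    ∑ k ∈ Icc 1 m, ψ₀ (m + n + 2 - k) / (k : ℝ) ^ 2 =
      ∑ k ∈ Icc 1 m, ψ₀ (m + n + 1 - k) / (k : ℝ) ^ 2 +
        ∑ k ∈ Icc 1 m, (1 : ℝ) / (((m + n + 1 - k : ℕ) : ℝ) * (k : ℝ) ^ 2) := by
  rw [← sum_add_distrib]
  refine sum_congr rfl fun k hk => ?_
  obtain ⟨hk1, hkm⟩ := mem_Icc.mp hk
  rw [show m + n + 2 - k = m + n + 1 - k + 1 by omega, ψ₀_succ (by omega)]
  have : (k : ℝ) ≠ 0 := by positivity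
  field_simp

theorem sum_Icc_ψ₀_reflect_div_sq {n : ℕ} (hn : n ≠ 0) (m : ℕ) :
    ∑ k ∈ Icc 1 m, ψ₀ (m + n + 1 - k) / (k : ℝ) ^ 2 =
      ∑ k ∈ Icc 1 m, (ψ₁ (k + n) / (k : ℝ) -
          ψ₁ k / ((k + n : ℕ) : ℝ) + ψ₁ (k + n) / ((k + n : ℕ) : ℝ)) +
        (1 / (n : ℝ) ^ 2) *
          (-ψ₀ (n + 1) + ψ₀ (m + n + 1) - ψ₀ (m + 1) + ψ₀ 1) +
        (1 / (n : ℝ)) * (ψ₁ (n + 1) - ψ₁ (m + n + 1)) +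
        (1 / 2) * (2 * ψ₁ (m + n + 1) * (ψ₀ (n + 1) - ψ₀ (m + 1) + ψ₀ 1) -
          2 * ψ₁ (m + 1) * ψ₀ (n + 1) + ψ₂ (n + 1) - ψ₂ (m + n + 1)) +
        ψ₀ (m + n + 1) * (ψ₁ 1 - ψ₁ (m + n + 1)) := by
  induction m with
  | zero =>
    simp only [zero_add, Icc_eq_empty_of_lt zero_lt_one, sum_empty]
    ring
  | succ m ih =>
    rw [sum_Icc_succ_top (Nat.le_add_left 1 m), sum_Icc_succ_top (Nat.le_add_left 1 m),
      show m + 1 + n + 1 - (m + 1) = n + 1 by omega, show m + 1 + n + 1 = m + n + 2 by omega,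
      sum_Icc_ψ₀_reflect_succ, ih, sum_Icc_one_div_reflect_mul_sq,
      show m + 1 + n = m + n + 1 by omega, ψ₀_succ (l := m + n + 1) (by omega),
      ψ₁_succ (l := m + n + 1) (by omega), ψ₂_succ (l := m + n + 1) (by omega),
      ψ₀_succ (l := m + 1) (by omega), ψ₁_succ (l := m + 1) (by omega)]
    have : (n : ℝ) ≠ 0 := by exact_mod_cast hn
    push_cast
    field_simp
    ring

theorem stmt9_general (m a : ℕ) (ha : m < a) :
    ∑ k ∈ Finset.Icc 1 m, ψ₀ (a + 1 - k) / (k : ℝ) ^ 2 =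
      ∑ k ∈ Finset.Icc 1 m, (ψ₁ (k + a - m) / (k : ℝ) -
          ψ₁ k / ((k + a - m : ℕ) : ℝ) + ψ₁ (k + a - m) / ((k + a - m : ℕ) : ℝ)) +
        (1 / ((a : ℝ) - m) ^ 2) *
          (-ψ₀ (a - m + 1) + ψ₀ (a + 1) - ψ₀ (m + 1) + ψ₀ 1) +
        (1 / ((a : ℝ) - m)) * (ψ₁ (a - m + 1) - ψ₁ (a + 1)) +
        (1 / 2) * (2 * ψ₁ (a + 1) * (ψ₀ (a - m + 1) - ψ₀ (m + 1) + ψ₀ 1) -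
          2 * ψ₁ (m + 1) * ψ₀ (a - m + 1) + ψ₂ (a - m + 1) - ψ₂ (a + 1)) +
        ψ₀ (a + 1) * (ψ₁ 1 - ψ₁ (a + 1)) := by
  obtain ⟨n, hn, rfl⟩ : ∃ n, n ≠ 0 ∧ a = m + n := ⟨a - m, by omega, by omega⟩
  have hsub : ∀ k, k + (m + n) - m = k + n := fun k => by omega
  simpa only [Nat.add_sub_cancel_left, Nat.cast_add, add_sub_cancel_left, hsub] using
    sum_Icc_ψ₀_reflect_div_sq hn m

theorem stmt9 (m a : ℕ) (hm : 0 < m) (ha : m < a) :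
    ∑ k ∈ Finset.Icc 1 m, ψ₀ (a + 1 - k) / (k : ℝ) ^ 2 =
      ∑ k ∈ Finset.Icc 1 m, (ψ₁ (k + a - m) / (k : ℝ) -
          ψ₁ k / ((k + a - m : ℕ) : ℝ) + ψ₁ (k + a - m) / ((k + a - m : ℕ) : ℝ)) +
        (1 / ((a : ℝ) - m) ^ 2) *
          (-ψ₀ (a - m + 1) + ψ₀ (a + 1) - ψ₀ (m + 1) + ψ₀ 1) +
        (1 / ((a : ℝ) - m)) * (ψ₁ (a - m + 1) - ψ₁ (a + 1)) +
        (1 / 2) * (2 * ψ₁ (a + 1) * (ψ₀ (a - m + 1) - ψ₀ (m + 1) + ψ₀ 1) -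
          2 * ψ₁ (m + 1) * ψ₀ (a - m + 1) + ψ₂ (a - m + 1) - ψ₂ (a + 1)) +
        ψ₀ (a + 1) * (ψ₁ 1 - ψ₁ (a + 1)) :=
  stmt9_general m a ha
end

section
/- Let m, a, b be positive integers. Then ∑_{k=1}^{m} (1/(k+a) + 1/(k+b))·(ψ₀(k+a+b+m) - ψ₀(k+a+b)) = [m/(a(a+m))]·(ψ₀(b+m+1) - ψ₀(b+1)) + [m/(b(b+m))]·(ψ₀(a+m+1) - ψ₀(a+1)) - ψ₀(b+1)·ψ₀(a+m+1) - ψ₀(a+1)·ψ₀(b+m+1) + ψ₀(a+m+1)·ψ₀(b+m+1) - (1/(a+m) + 1/a + 1/(b+m) + 1/b)·ψ₀(a+b+m+1) + [(a+b+2m)/((a+m)(b+m))]·ψ₀(a+b+2m+1) + ψ₀(a+1)·ψ₀(b+1) + (1/a + 1/b)·ψ₀(a+b+1). -/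
/-!
Since `ψ₀ (n + 1) = H n - γ` with `H` the harmonic numbers, and the coefficients of the
right-hand side sum to zero, both sides are expressions in harmonic numbers. Both vanish at
`m = 0`, so it suffices to compare their increments in `m`. Raising `m` lengthens each window
`H (k + a + b + m) - H (k + a + b)` of the sum by one reciprocal, and the resulting sums
`∑ 1 / ((k + a) (k + a + b + m + 1))` telescope by partial fractions; what is left is a
rational identity in `a, b, m`.
-/

open Finset

lemma cast_harmonic_succ (n : ℕ) :
    (harmonic (n + 1) : ℝ) = harmonic n + 1 / ((n : ℝ) + 1) := by
  simp

lemma ψ₀_succ_s17 (n : ℕ) : ψ₀ (n + 1) = harmonic n - Real.eulerMascheroniConstant := by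
  rw [ψ₀, Nat.add_sub_cancel, harmonic]
  push_cast
  simp only [one_div]
  ring

lemma sum_range_one_div_add (c m : ℕ) :
    ∑ i ∈ range m, 1 / ((i : ℝ) + 1 + c) = harmonic (c + m) - harmonic c := by
  induction m with
  | zero => simp
  | succ m ih =>
    rw [sum_range_succ, ih, ← add_assoc, cast_harmonic_succ]
    push_cast
    ring

lemma sum_range_one_div_mul_add (c d m : ℕ) (hd : d ≠ 0) :
    ∑ i ∈ range m, 1 / (((i : ℝ) + 1 + c) * ((i : ℝ) + 1 + c + d)) =
      ((harmonic (c + m) - harmonic c) - (harmonic (c + d + m) - harmonic (c + d))) / d := by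
  have hd' : (d : ℝ) ≠ 0 := by exact_mod_cast hd
  have partial_fractions (i : ℕ) : 1 / (((i : ℝ) + 1 + c) * ((i : ℝ) + 1 + c + d)) =
      (1 / ((i : ℝ) + 1 + c) - 1 / ((i : ℝ) + 1 + (c + d : ℕ))) / d := by
    push_cast
    field_simp
    ring
  simp_rw [partial_fractions, ← sum_div, sum_sub_distrib, sum_range_one_div_add]

lemma one_div_add_one_div_mul_one_div_add {p q : ℝ} (hp : p ≠ 0) (hq : q ≠ 0)
    (hpq : p + q ≠ 0) : (1 / p + 1 / q) * (1 / (p + q)) = 1 / p * (1 / q) := by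
  field_simp
  ring

noncomputable def harmonicPairSum (a b m : ℕ) : ℝ :=
  ∑ k ∈ range m, (1 / ((k : ℝ) + 1 + a) + 1 / ((k : ℝ) + 1 + b)) *
    (harmonic (k + a + b + m) - harmonic (k + a + b))

noncomputable def harmonicPairSumIncrement (a b m : ℕ) : ℝ :=
  ((harmonic (a + m) - harmonic a) - (harmonic (a + b + 2 * m) - harmonic (a + b + m))) /
      ((b : ℝ) + m) +
    ((harmonic (b + m) - harmonic b) - (harmonic (a + b + 2 * m) - harmonic (a + b + m))) /
      ((a : ℝ) + m) +
    (1 / ((a : ℝ) + m + 1) + 1 / ((b : ℝ) + m + 1)) *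
      (harmonic (a + b + 2 * m + 1) - harmonic (a + b + m))

lemma harmonicPairSum_succ (a b m : ℕ) (ha : 0 < a) (hb : 0 < b) :
    harmonicPairSum a b (m + 1) = harmonicPairSum a b m + harmonicPairSumIncrement a b m := by
  have window_succ (k : ℕ) :
      (1 / ((k : ℝ) + 1 + a) + 1 / ((k : ℝ) + 1 + b)) *
          (harmonic (k + a + b + (m + 1)) - harmonic (k + a + b)) =
        (1 / ((k : ℝ) + 1 + a) + 1 / ((k : ℝ) + 1 + b)) *
          (harmonic (k + a + b + m) - harmonic (k + a + b)) +
        (1 / (((k : ℝ) + 1 + a) * ((k : ℝ) + 1 + a + (b + m : ℕ))) +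
          1 / (((k : ℝ) + 1 + b) * ((k : ℝ) + 1 + b + (a + m : ℕ)))) := by
    rw [← add_assoc, cast_harmonic_succ]
    push_cast
    field_simp
    ring
  rw [harmonicPairSum, sum_range_succ, sum_congr rfl fun k _ => window_succ k, sum_add_distrib,
    sum_add_distrib, sum_range_one_div_mul_add _ _ _ (by omega),
    sum_range_one_div_mul_add _ _ _ (by omega), harmonicPairSum, harmonicPairSumIncrement]
  rw [show a + (b + m) + m = a + b + 2 * m by ring, show b + (a + m) + m = a + b + 2 * m by ring,
    show b + (a + m) = a + b + m by ring, ← add_assoc a b m,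
    show m + a + b + (m + 1) = a + b + 2 * m + 1 by ring, show m + a + b = a + b + m by ring]
  push_cast
  ring

/-- `f n` stands for `ψ₀ (n + 1)`. -/
noncomputable def pairClosedForm (f : ℕ → ℝ) (a b m : ℕ) : ℝ :=
  (1 / (a : ℝ) - 1 / ((a : ℝ) + m)) * (f (b + m) - f b) +
    (1 / (b : ℝ) - 1 / ((b : ℝ) + m)) * (f (a + m) - f a) +
    (f (a + m) - f a) * (f (b + m) - f b) -
    (1 / ((a : ℝ) + m) + 1 / (a : ℝ) + 1 / ((b : ℝ) + m) + 1 / (b : ℝ)) * f (a + b + m) +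
    (1 / ((a : ℝ) + m) + 1 / ((b : ℝ) + m)) * f (a + b + 2 * m) +
    (1 / (a : ℝ) + 1 / (b : ℝ)) * f (a + b)

lemma pairClosedForm_zero (f : ℕ → ℝ) (a b : ℕ) : pairClosedForm f a b 0 = 0 := by
  simp only [pairClosedForm, CharP.cast_eq_zero, add_zero, mul_zero]
  ring

lemma pairClosedForm_sub_const (f : ℕ → ℝ) (c : ℝ) (a b m : ℕ) :
    pairClosedForm (fun n => f n - c) a b m = pairClosedForm f a b m := by
  simp only [pairClosedForm]
  ring

lemma pairClosedForm_eq (f : ℕ → ℝ) (a b m : ℕ) (ha : 0 < a) (hb : 0 < b) :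
    pairClosedForm f a b m =
      ((m : ℝ) / ((a : ℝ) * ((a : ℝ) + m))) * (f (b + m) - f b) +
      ((m : ℝ) / ((b : ℝ) * ((b : ℝ) + m))) * (f (a + m) - f a) -
      f b * f (a + m) - f a * f (b + m) + f (a + m) * f (b + m) -
      (1 / ((a : ℝ) + m) + 1 / (a : ℝ) + 1 / ((b : ℝ) + m) + 1 / (b : ℝ)) * f (a + b + m) +
      (((a : ℝ) + b + 2 * m) / (((a : ℝ) + m) * ((b : ℝ) + m))) * f (a + b + 2 * m) +
      f a * f b + (1 / (a : ℝ) + 1 / (b : ℝ)) * f (a + b) := by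
  have ha' : (a : ℝ) ≠ 0 := by positivity
  have hb' : (b : ℝ) ≠ 0 := by positivity
  have ham : (a : ℝ) + m ≠ 0 := by positivity
  have hbm : (b : ℝ) + m ≠ 0 := by positivity
  have coeff_a : (m : ℝ) / ((a : ℝ) * ((a : ℝ) + m)) = 1 / (a : ℝ) - 1 / ((a : ℝ) + m) := by
    field_simp
    ring
  have coeff_b : (m : ℝ) / ((b : ℝ) * ((b : ℝ) + m)) = 1 / (b : ℝ) - 1 / ((b : ℝ) + m) := by
    field_simp
    ring
  have coeff_ab : ((a : ℝ) + b + 2 * m) / (((a : ℝ) + m) * ((b : ℝ) + m)) =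
      1 / ((a : ℝ) + m) + 1 / ((b : ℝ) + m) := by
    field_simp
    ring
  rw [pairClosedForm, coeff_a, coeff_b, coeff_ab]
  ring

lemma pairClosedForm_harmonic_succ (a b m : ℕ) (ha : 0 < a) (hb : 0 < b) :
    pairClosedForm (fun n => harmonic n) a b (m + 1) =
      pairClosedForm (fun n => harmonic n) a b m + harmonicPairSumIncrement a b m := by
  have hx : (a : ℝ) ≠ 0 := by positivity
  have hy : (b : ℝ) ≠ 0 := by positivity
  have hX : (a : ℝ) + m + 1 ≠ 0 := by positivity
  have hY : (b : ℝ) + m + 1 ≠ 0 := by positivity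
  simp only [pairClosedForm, harmonicPairSumIncrement]
  rw [← add_assoc a m 1, ← add_assoc b m 1, ← add_assoc (a + b) m 1,
    show a + b + 2 * (m + 1) = a + b + 2 * m + 1 + 1 by ring]
  simp only [cast_harmonic_succ]
  push_cast
  -- The harmonic terms agree on both sides; the leftover rational terms cancel by
  -- `(1/p + 1/q) / (p + q) = 1/(p q)` at `(a+m+1, b+m+1)`, `(a, b+m+1)` and `(b, a+m+1)`.
  linear_combination one_div_add_one_div_mul_one_div_add hX hY (by positivity) -
    one_div_add_one_div_mul_one_div_add hx hY (by positivity) -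
    one_div_add_one_div_mul_one_div_add hy hX (by positivity)

lemma harmonicPairSum_eq_pairClosedForm (a b m : ℕ) (ha : 0 < a) (hb : 0 < b) :
    harmonicPairSum a b m = pairClosedForm (fun n => harmonic n) a b m := by
  induction m with
  | zero => simp [harmonicPairSum, pairClosedForm_zero]
  | succ m ih => rw [harmonicPairSum_succ a b m ha hb, pairClosedForm_harmonic_succ a b m ha hb, ih]

lemma sum_Icc_ψ₀_eq_harmonicPairSum (a b m : ℕ) :
    ∑ k ∈ Icc 1 m, (1 / ((k : ℝ) + a) + 1 / ((k : ℝ) + b)) *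
        (ψ₀ (k + a + b + m) - ψ₀ (k + a + b)) = harmonicPairSum a b m := by
  rw [← Ico_add_one_right_eq_Icc, sum_Ico_eq_sum_range, Nat.add_sub_cancel, harmonicPairSum]
  refine sum_congr rfl fun k _ => ?_
  rw [show 1 + k + a + b + m = k + a + b + m + 1 by ring,
    show 1 + k + a + b = k + a + b + 1 by ring, ψ₀_succ_s17, ψ₀_succ_s17]
  push_cast
  ring

theorem stmt17_general (m a b : ℕ) (ha : 0 < a) (hb : 0 < b) :
    ∑ k ∈ Finset.Icc 1 m, (1 / ((k : ℝ) + a) + 1 / ((k : ℝ) + b)) *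
        (ψ₀ (k + a + b + m) - ψ₀ (k + a + b)) =
      ((m : ℝ) / ((a : ℝ) * ((a : ℝ) + m))) * (ψ₀ (b + m + 1) - ψ₀ (b + 1)) +
      ((m : ℝ) / ((b : ℝ) * ((b : ℝ) + m))) * (ψ₀ (a + m + 1) - ψ₀ (a + 1)) -
      ψ₀ (b + 1) * ψ₀ (a + m + 1) - ψ₀ (a + 1) * ψ₀ (b + m + 1) +
      ψ₀ (a + m + 1) * ψ₀ (b + m + 1) -
      (1 / ((a : ℝ) + m) + 1 / (a : ℝ) + 1 / ((b : ℝ) + m) + 1 / (b : ℝ)) *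
        ψ₀ (a + b + m + 1) +
      (((a : ℝ) + b + 2 * m) / (((a : ℝ) + m) * ((b : ℝ) + m))) *
        ψ₀ (a + b + 2 * m + 1) +
      ψ₀ (a + 1) * ψ₀ (b + 1) + (1 / (a : ℝ) + 1 / (b : ℝ)) * ψ₀ (a + b + 1) := by
  rw [sum_Icc_ψ₀_eq_harmonicPairSum, harmonicPairSum_eq_pairClosedForm a b m ha hb,
    ← pairClosedForm_sub_const _ Real.eulerMascheroniConstant]
  simp_rw [← ψ₀_succ_s17]
  exact pairClosedForm_eq _ a b m ha hb

theorem stmt17 (m a b : ℕ) (hm : 0 < m) (ha : 0 < a) (hb : 0 < b) :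
    ∑ k ∈ Finset.Icc 1 m, (1 / ((k : ℝ) + a) + 1 / ((k : ℝ) + b)) *
        (ψ₀ (k + a + b + m) - ψ₀ (k + a + b)) =
      ((m : ℝ) / ((a : ℝ) * ((a : ℝ) + m))) * (ψ₀ (b + m + 1) - ψ₀ (b + 1)) +
      ((m : ℝ) / ((b : ℝ) * ((b : ℝ) + m))) * (ψ₀ (a + m + 1) - ψ₀ (a + 1)) -
      ψ₀ (b + 1) * ψ₀ (a + m + 1) - ψ₀ (a + 1) * ψ₀ (b + m + 1) +
      ψ₀ (a + m + 1) * ψ₀ (b + m + 1) -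
      (1 / ((a : ℝ) + m) + 1 / (a : ℝ) + 1 / ((b : ℝ) + m) + 1 / (b : ℝ)) *
        ψ₀ (a + b + m + 1) +
      (((a : ℝ) + b + 2 * m) / (((a : ℝ) + m) * ((b : ℝ) + m))) *
        ψ₀ (a + b + 2 * m + 1) +
      ψ₀ (a + 1) * ψ₀ (b + 1) + (1 / (a : ℝ) + 1 / (b : ℝ)) * ψ₀ (a + b + 1) :=
  stmt17_general m a b ha hb
end
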